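/- arXiv:2407.19885 — 10 statements merged into one kernel-verified Lean document; each statement's English description precedes it below -/
import Mathlib

section
/- For every positive integer n, E_{2n-1} = 4(2n-1)! · (-1)^n/π^{2n} · ∑_{k≥0} 1/(2k+1)^{2n}. -/
/-!
Since 2/(e^z+1) = 2/(e^z-1) - 4/(e^{2z}-1), comparing with z/(e^z-1) = ∑ B_n z^n/n! gives
E_m = 2(1 - 2^{m+1}) B_{m+1}/(m+1). On the other side, the odd terms of ζ(2n) = ∑ 1/k^{2n} sum to
(1 - 2^{-2n}) ζ(2n), and Euler's formula expresses ζ(2n) through B_{2n}.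
-/

open Real

/-- The Euler numbers, defined by the generating function 2/(e^z+1) = ∑ E_n z^n/n!,
equivalently by E_0 = 1 and E_n = -∑_{i=0}^n C(n,i) E_i for n ≥ 1. -/
noncomputable def eulerNumber (n : ℕ) : ℚ :=
  Nat.strongRecOn n fun n ih =>
    if n = 0 then 1
    else -(1/2) * ∑ i : Fin n, (n.choose i : ℚ) * ih i i.isLt

open PowerSeries Nat Finset

theorem eulerNumber_eq (n : ℕ) :
    eulerNumber n = if n = 0 then 1
      else -(1/2) * ∑ i ∈ range n, (n.choose i : ℚ) * eulerNumber i := by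
  rw [eulerNumber, Nat.strongRecOn_eq, ← Fin.sum_univ_eq_sum_range]
  rfl

theorem sum_range_succ_choose_mul_eulerNumber_add (n : ℕ) :
    ∑ i ∈ range (n + 1), (n.choose i : ℚ) * eulerNumber i + eulerNumber n =
      if n = 0 then 2 else 0 := by
  rw [sum_range_succ, choose_self, cast_one, one_mul]
  split_ifs with hn
  · subst hn
    rw [eulerNumber_eq]
    norm_num
  · rw [eulerNumber_eq n, if_neg hn]
    ring

theorem coeff_mk_div_factorial_mul_exp (a : ℕ → ℚ) (n : ℕ) :
    coeff n (mk (fun i => a i / i !) * exp ℚ) =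
      (∑ i ∈ range (n + 1), (n.choose i : ℚ) * a i) / n ! := by
  rw [coeff_mul, Nat.sum_antidiagonal_eq_sum_range_succ_mk, sum_div]
  refine sum_congr rfl fun i hi => ?_
  have hi : i ≤ n := Nat.lt_succ_iff.mp (mem_range.mp hi)
  rw [coeff_mk, coeff_exp, cast_choose ℚ hi, Algebra.algebraMap_self, RingHom.id_apply]
  field_simp

noncomputable def eulerSeries : ℚ⟦X⟧ := mk fun n => eulerNumber n / n !

theorem eulerSeries_mul_exp_add_one : eulerSeries * (exp ℚ + 1) = 2 := by
  ext n
  rw [mul_add, mul_one, map_add, eulerSeries, coeff_mk_div_factorial_mul_exp, coeff_mk,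
    ← add_div, sum_range_succ_choose_mul_eulerNumber_add, ← map_ofNat (C (R := ℚ)) 2, coeff_C]
  split_ifs with hn
  · rw [hn, factorial_zero, cast_one, div_one]
  · exact zero_div _

theorem X_mul_eulerSeries :
    X * eulerSeries = 2 * (bernoulliPowerSeries ℚ - rescale 2 (bernoulliPowerSeries ℚ)) := by
  have hexp_add_one : exp ℚ + 1 ≠ 0 := fun h => by
    simpa using congrArg constantCoeff h
  have hexp_sub_one : exp ℚ - 1 ≠ 0 := fun h => by
    simpa [coeff_exp] using congrArg (coeff 1) h
  have hB := bernoulliPowerSeries_mul_exp_sub_one ℚ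
  have hB₂ : rescale 2 (bernoulliPowerSeries ℚ) * (exp ℚ ^ 2 - 1) = 2 * X := by
    have := congrArg (rescale (2 : ℚ)) hB
    rwa [map_mul, map_sub, map_one, rescale_X, map_ofNat, ← Nat.cast_ofNat,
      ← exp_pow_eq_rescale_exp] at this
  refine mul_right_cancel₀ (mul_ne_zero hexp_add_one hexp_sub_one) ?_
  calc X * eulerSeries * ((exp ℚ + 1) * (exp ℚ - 1))
      = X * (eulerSeries * (exp ℚ + 1)) * (exp ℚ - 1) := by ring
    _ = 2 * (bernoulliPowerSeries ℚ * (exp ℚ - 1)) * (exp ℚ + 1)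
        - 2 * (rescale 2 (bernoulliPowerSeries ℚ) * (exp ℚ ^ 2 - 1)) := by
      rw [eulerSeries_mul_exp_add_one, hB, hB₂]; ring
    _ = _ := by ring

theorem eulerNumber_eq_bernoulli (m : ℕ) :
    eulerNumber m = 2 * (1 - 2 ^ (m + 1)) * bernoulli (m + 1) / (m + 1) := by
  have h := congrArg (coeff (m + 1)) X_mul_eulerSeries
  rw [coeff_succ_X_mul, ← map_ofNat (C (R := ℚ)) 2, coeff_C_mul, map_sub, coeff_rescale,
    eulerSeries, bernoulliPowerSeries, coeff_mk, coeff_mk, factorial_succ] at h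
  push_cast at h
  field_simp at h ⊢
  linear_combination h

theorem HasSum.odd_of_even_eq_mul {α : Type*} [NormedRing α] [CompleteSpace α]
    {f : ℕ → α} {c Z : α} (hf : ∀ k, f (2 * k) = c * f k) (h : HasSum f Z) :
    HasSum (fun k => f (2 * k + 1)) ((1 - c) * Z) := by
  have heven : HasSum (fun k => f (2 * k)) (c * Z) := by
    simpa only [hf] using h.mul_left c
  obtain ⟨W, hodd⟩ : Summable (fun k => f (2 * k + 1)) :=
    h.summable.comp_injective fun a b hab => by simpa using hab
  have hW : W = Z - c * Z := eq_sub_of_add_eq' (h.unique (heven.even_add_odd hodd)).symm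
  rwa [sub_mul, one_mul, ← hW]

theorem hasSum_one_div_odd_pow_two_mul {n : ℕ} (hn : n ≠ 0) :
    HasSum (fun k : ℕ => 1 / (2 * (k : ℝ) + 1) ^ (2 * n))
      ((1 - 1 / 2 ^ (2 * n)) * ((-1) ^ (n + 1) * 2 ^ (2 * n - 1) * π ^ (2 * n) *
        bernoulli (2 * n) / (2 * n)!)) := by
  have := (hasSum_zeta_nat hn).odd_of_even_eq_mul (c := 1 / 2 ^ (2 * n)) fun k => by
    push_cast; rw [mul_pow]; ring
  exact_mod_cast this

theorem stmt_2 (n : ℕ) (hn : 0 < n) :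
    (eulerNumber (2 * n - 1) : ℝ) =
      4 * (Nat.factorial (2 * n - 1)) * ((-1) ^ n / π ^ (2 * n)) *
        ∑' k : ℕ, 1 / (2 * (k : ℝ) + 1) ^ (2 * n) := by
  obtain ⟨m, rfl⟩ : ∃ m, n = m + 1 := ⟨n - 1, by omega⟩
  rw [(hasSum_one_div_odd_pow_two_mul (by omega : m + 1 ≠ 0)).tsum_eq,
    show 2 * (m + 1) - 1 = 2 * m + 1 by omega, eulerNumber_eq_bernoulli,
    show 2 * (m + 1) = 2 * m + 1 + 1 by omega, factorial_succ (2 * m + 1)]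
  push_cast
  field_simp
  ring_nf
  rw [Even.neg_one_pow ⟨m, by ring⟩]
  ring
end

section
/- For all real x with |x| < π/2, tan x = ∑_{k≥0} (2/(π(2k+1)))^2 · 2x / (1 - (2x/(π(2k+1)))^2). -/
/-!
Start from Mathlib's Mittag-Leffler expansion `π cot (π z) - 1 / z = ∑_{n ≥ 1} 2z / (z² - n²)`.
The expansion at `z / 2` consists of the even-`n` terms of twice the expansion at `z`, so
subtracting it leaves the sum of `4z / (z² - n²)` over odd `n`. On the trigonometric side the
difference is `-π (cot t - 2 cot 2t) = -π tan t` with `t = π z / 2`. Substituting `z = 2x / π`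
gives the expansion of `tan x`.
-/

open Real

theorem HasSum.even_of_odd {α : Type*} [AddCommGroup α] [UniformSpace α] [IsUniformAddGroup α]
    [CompleteSpace α] [T2Space α] {f : ℕ → α} {a b : α} (hf : HasSum f a)
    (hodd : HasSum (fun k ↦ f (2 * k + 1)) b) : HasSum (fun k ↦ f (2 * k)) (a - b) := by
  have heven := (hf.summable.comp_injective (mul_right_injective₀ two_ne_zero)).hasSum
  rw [hf.unique (heven.even_add_odd hodd), add_sub_cancel_right]
  exact heven

-- Where `sin x` or `cos x` vanishes both sides are `0`, by the convention `x / 0 = 0`.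
theorem Real.cot_sub_two_mul_cot_two_mul (x : ℝ) : cot x - 2 * cot (2 * x) = tan x := by
  rw [cot_eq_cos_div_sin, cot_eq_cos_div_sin, tan_eq_sin_div_cos, sin_two_mul, cos_two_mul]
  rcases eq_or_ne (sin x) 0 with hsin | hsin
  · simp [hsin]
  rcases eq_or_ne (cos x) 0 with hcos | hcos
  · simp [hcos]
  rw [← sin_sq_add_cos_sq x]
  field_simp
  ring

theorem Real.hasSum_cot_pi_mul {z : ℝ} (hz : ∀ n : ℤ, (n : ℝ) ≠ z) :
    HasSum (fun n : ℕ ↦ 2 * z / (z ^ 2 - (n + 1) ^ 2)) (π * cot (π * z) - 1 / z) := by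
  have hz' : (z : ℂ) ∈ Complex.integerComplement := by
    rintro ⟨n, hn⟩
    exact hz n (mod_cast hn)
  have hterm (n : ℕ) : cotTerm z n = 2 * z / (z ^ 2 - (n + 1) ^ 2) := by
    rw [cotTerm_identity hz' n]
    ring
  rw [← Complex.hasSum_ofReal]
  push_cast
  simpa only [hterm] using (summable_cotTerm hz').hasSum_iff.mpr (cot_series_rep' hz').symm

theorem Real.intCast_ne_of_abs_lt_one {z : ℝ} (hz0 : z ≠ 0) (hz : |z| < 1) (n : ℤ) :
    (n : ℝ) ≠ z := by
  rintro rfl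
  have : n = 0 := Int.abs_lt_one_iff.mp (mod_cast hz)
  exact hz0 (mod_cast this)

theorem Real.hasSum_tan_pi_mul_div_two {z : ℝ} (hz : |z| < 1) :
    HasSum (fun k : ℕ ↦ 4 * z / ((2 * k + 1) ^ 2 - z ^ 2)) (π * tan (π * z / 2)) := by
  rcases eq_or_ne z 0 with rfl | hz0
  · simp
  have hhalf : |z / 2| < 1 := by rw [abs_div, abs_two]; linarith [abs_nonneg z]
  set f : ℕ → ℝ := fun m ↦ 4 * z / (z ^ 2 - (m + 1) ^ 2)
  have hall : HasSum f (2 * (π * cot (π * z) - 1 / z)) :=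
    ((hasSum_cot_pi_mul (intCast_ne_of_abs_lt_one hz0 hz)).mul_left 2).congr_fun
      fun n ↦ by ring
  have hodd : HasSum (fun k ↦ f (2 * k + 1)) (π * cot (π * (z / 2)) - 1 / (z / 2)) := by
    refine (hasSum_cot_pi_mul (intCast_ne_of_abs_lt_one (by simpa) hhalf)).congr_fun fun n ↦ ?_
    rw [show (z / 2) ^ 2 - (n + 1) ^ 2 = (z ^ 2 - (2 * n + 1 + 1) ^ 2) / 4 by ring,
      div_div_eq_mul_div]
    simp only [f]
    push_cast
    ring
  have hvalue : -(2 * (π * cot (π * z) - 1 / z) - (π * cot (π * (z / 2)) - 1 / (z / 2))) =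
      π * tan (π * z / 2) := by
    rw [← cot_sub_two_mul_cot_two_mul, show 2 * (π * z / 2) = π * z by ring,
      show π * (z / 2) = π * z / 2 by ring]
    field_simp
    ring
  rw [← hvalue]
  refine (hall.even_of_odd hodd).neg.congr_fun fun k ↦ ?_
  simp only [f]
  push_cast
  rw [← div_neg, neg_sub]

theorem stmt_4 (x : ℝ) (hx : |x| < π / 2) :
    Real.tan x =
      ∑' k : ℕ, (2 / (π * (2 * (k : ℝ) + 1))) ^ 2 * (2 * x) /
        (1 - (2 * x / (π * (2 * (k : ℝ) + 1))) ^ 2) := by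
  have hz : |2 * x / π| < 1 := by
    rw [abs_div, abs_of_pos pi_pos, div_lt_one pi_pos, abs_mul, abs_two]
    linarith
  have h := (hasSum_tan_pi_mul_div_two hz).div_const π
  rw [show π * tan (π * (2 * x / π) / 2) / π = tan x by field_simp] at h
  rw [← h.tsum_eq]
  refine tsum_congr fun k ↦ ?_
  have hden : (2 * k + 1) ^ 2 - (2 * x / π) ^ 2 ≠ 0 := by
    refine sub_ne_zero.mpr (sq_lt_sq.mpr ?_).ne'
    rw [abs_of_pos (by positivity : (0 : ℝ) < 2 * k + 1)]
    linarith [k.cast_nonneg (α := ℝ)]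
  field_simp
  ring
end

section
/- For all real x, cos x = ∏_{k≥0} (1 - (2x/((2k+1)π))^2), where the infinite product converges. -/
open Real Finset Filter Topology

/-!
With `y = (1 + t) / 2` the Euler factor `1 - y² / (j + 1)²` equals `(2j + 1 - t)(2j + 3 + t) / (2j + 2)²`,
so the partial Euler product for `sin (π y) = cos (π t / 2)` splits, after shifting half of the
factors by one index, as the partial odd product `∏ (1 - t² / (2k + 1)²)` times the Wallis-type
factor `π (2N + 1 + t) / 2 · ∏_{k<N} ((2k + 1) / (2k + 2))²`. At `t = 0` the odd product is `1`, so
Euler's product at `y = 1/2` shows that this factor tends to `1`, for every `t`.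
Multipliability follows from the summability of `t² / (2k + 1)²`.
-/

lemma summable_sq_div_odd_sq (t : ℝ) :
    Summable fun k : ℕ => t ^ 2 / (2 * (k : ℝ) + 1) ^ 2 := by
  have hodd : Function.Injective fun k : ℕ => 2 * k + 1 := fun a b h => by simpa using h
  refine ((summable_nat_pow_inv.mpr one_lt_two).comp_injective hodd).mul_left (t ^ 2) |>.congr
    fun k => ?_
  simp [div_eq_mul_inv]

lemma multipliable_one_sub_sq_div_odd_sq (t : ℝ) :
    Multipliable fun k : ℕ => 1 - t ^ 2 / (2 * (k : ℝ) + 1) ^ 2 := by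
  simpa [sub_eq_add_neg] using Real.multipliable_one_add_of_summable (summable_sq_div_odd_sq t).neg

lemma euler_sin_prod_eq_odd_prod_mul (t : ℝ) (N : ℕ) :
    (1 + t) / 2 * ∏ j ∈ range N, (1 - ((1 + t) / 2) ^ 2 / ((j : ℝ) + 1) ^ 2) =
      (∏ k ∈ range N, (1 - t ^ 2 / (2 * (k : ℝ) + 1) ^ 2)) *
        ((2 * N + 1 + t) / 2 * ∏ k ∈ range N, ((2 * (k : ℝ) + 1) / (2 * k + 2)) ^ 2) := by
  induction N with
  | zero => simp
  | succ N ih =>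
    simp only [prod_range_succ, ← mul_assoc, ih]
    have h₁ : (2 * (N : ℝ) + 1) ≠ 0 := by positivity
    have h₂ : (2 * (N : ℝ) + 2) ≠ 0 := by positivity
    have h₃ : ((N : ℝ) + 1) ≠ 0 := by positivity
    push_cast
    field_simp
    ring

lemma tendsto_pi_mul_wallis_prod (t : ℝ) :
    Tendsto (fun N : ℕ => π * ((2 * N + 1 + t) / 2 *
      ∏ k ∈ range N, ((2 * (k : ℝ) + 1) / (2 * k + 2)) ^ 2)) atTop (𝓝 1) := by
  have h₀ : Tendsto (fun N : ℕ => π * ((2 * N + 1) / 2 *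
      ∏ k ∈ range N, ((2 * (k : ℝ) + 1) / (2 * k + 2)) ^ 2)) atTop (𝓝 1) := by
    have h := Real.tendsto_euler_sin_prod (1 / 2)
    rw [show sin (π * (1 / 2)) = 1 by rw [mul_one_div, sin_pi_div_two]] at h
    refine h.congr fun N => ?_
    have := euler_sin_prod_eq_odd_prod_mul 0 N
    simp only [add_zero, zero_pow two_ne_zero, zero_div, sub_zero, prod_const_one, one_mul] at this
    rw [mul_assoc, this]
  have hodd : Tendsto (fun N : ℕ => 2 * (N : ℝ) + 1) atTop atTop :=
    tendsto_atTop_add_const_right _ _ (tendsto_natCast_atTop_atTop.const_mul_atTop two_pos)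
  have h₁ : Tendsto (fun N : ℕ => 1 + t / (2 * (N : ℝ) + 1)) atTop (𝓝 1) := by
    simpa using tendsto_const_nhds.add (tendsto_const_nhds.div_atTop hodd)
  refine (mul_one (1 : ℝ) ▸ h₀.mul h₁).congr fun N => ?_
  have : (2 * (N : ℝ) + 1) ≠ 0 := by positivity
  field_simp

theorem tendsto_prod_one_sub_sq_div_odd_sq (t : ℝ) :
    Tendsto (fun N : ℕ => ∏ k ∈ range N, (1 - t ^ 2 / (2 * (k : ℝ) + 1) ^ 2)) atTop
      (𝓝 (cos (π * t / 2))) := by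
  set a : ℕ → ℝ := fun N => π * ((2 * N + 1 + t) / 2 *
      ∏ k ∈ range N, ((2 * (k : ℝ) + 1) / (2 * k + 2)) ^ 2)
  have ha : Tendsto a atTop (𝓝 1) := tendsto_pi_mul_wallis_prod t
  have hsin := Real.tendsto_euler_sin_prod ((1 + t) / 2)
  rw [show sin (π * ((1 + t) / 2)) = cos (π * t / 2) by
    rw [← sin_add_pi_div_two]; ring_nf] at hsin
  have hprod : Tendsto (fun N => (∏ k ∈ range N, (1 - t ^ 2 / (2 * (k : ℝ) + 1) ^ 2)) * a N)
      atTop (𝓝 (cos (π * t / 2))) :=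
    hsin.congr fun N => by
      rw [mul_assoc, euler_sin_prod_eq_odd_prod_mul]
      ring
  simpa using (hprod.div ha one_ne_zero).congr' <|
    (ha.eventually_ne one_ne_zero).mono fun N hN => mul_div_cancel_right₀ _ hN

theorem stmt_6 (x : ℝ) :
    Multipliable (fun k : ℕ => 1 - (2 * x / ((2 * (k : ℝ) + 1) * π)) ^ 2) ∧
      Real.cos x = ∏' k : ℕ, (1 - (2 * x / ((2 * (k : ℝ) + 1) * π)) ^ 2) := by
  have hterm : (fun k : ℕ => 1 - (2 * x / ((2 * (k : ℝ) + 1) * π)) ^ 2) =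
      fun k : ℕ => 1 - (2 * x / π) ^ 2 / (2 * (k : ℝ) + 1) ^ 2 := by
    ext k
    rw [← div_pow, div_div, mul_comm π]
  have hcos : cos x = cos (π * (2 * x / π) / 2) := by
    rw [mul_div_cancel₀ _ pi_ne_zero, mul_div_cancel_left₀ _ two_ne_zero]
  have hM := multipliable_one_sub_sq_div_odd_sq (2 * x / π)
  rw [hterm, hcos]
  exact ⟨hM, tendsto_nhds_unique (tendsto_prod_one_sub_sq_div_odd_sq _) hM.hasProd.tendsto_prod_nat⟩
end

section
/- For all real x, cosh x = ∏_{k≥0} (1 + (2x/((2k+1)π))^2), where the infinite product converges. -/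
/-!
Euler's sine product at `z = i t` gives `sinh (π t) = π t ∏ (1 + t² / j²)`. Splitting the first
`2n` factors of the product for `sinh (2x)` by the parity of `j` yields the factors of the
claimed product for `cosh x` times the `n`-th partial product for `sinh x`, so
`sinh (2x) = 2 sinh x cosh x` identifies the limit. Convergence follows from `∑ 1/(2k+1)² < ∞`.
-/

open Real Filter Finset Topology

theorem Finset.prod_range_two_mul {M : Type*} [CommMonoid M] (g : ℕ → M) (n : ℕ) :
    ∏ j ∈ range (2 * n), g j = ∏ k ∈ range n, (g (2 * k) * g (2 * k + 1)) := by
  induction n with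
  | zero => simp
  | succ n ih => rw [mul_add_one, prod_range_succ, prod_range_succ, prod_range_succ, ih, mul_assoc]

theorem Real.tendsto_euler_sinh_prod (t : ℝ) :
    Tendsto (fun n : ℕ => π * t * ∏ j ∈ range n, ((1 : ℝ) + t ^ 2 / ((j : ℝ) + 1) ^ 2))
      atTop (𝓝 (sinh (π * t))) := by
  convert! (Complex.continuous_im.tendsto _).comp (Complex.tendsto_euler_sin_prod (t * Complex.I))
    using 1
  · ext1 n
    have hterm : (π : ℂ) * (t * Complex.I) * ∏ j ∈ range n, (1 - (t * Complex.I) ^ 2 / ((j : ℂ) + 1) ^ 2)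
        = ((π * t * ∏ j ∈ range n, ((1 : ℝ) + t ^ 2 / ((j : ℝ) + 1) ^ 2) : ℝ) : ℂ) * Complex.I := by
      push_cast
      simp only [mul_pow, Complex.I_sq]
      ring_nf
    rw [Function.comp_apply, hterm, Complex.mul_I_im, Complex.ofReal_re]
  · rw [← mul_assoc, ← Complex.ofReal_mul, Complex.sin_mul_I, Complex.mul_I_im,
      ← Complex.ofReal_sinh, Complex.ofReal_re]

theorem summable_sq_div_odd_mul_pi (x : ℝ) :
    Summable fun k : ℕ => (2 * x / ((2 * (k : ℝ) + 1) * π)) ^ 2 := by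
  have hodd : Summable fun k : ℕ => 1 / (((2 * k + 1 : ℕ) : ℝ)) ^ 2 :=
    (Real.summable_one_div_nat_pow.mpr one_lt_two).comp_injective
      (fun a b h => by simpa using h)
  convert! hodd.mul_left ((2 * x / π) ^ 2) using 2 with k
  push_cast
  field_simp

theorem prod_range_two_mul_one_add_sq_div_sq (t : ℝ) (n : ℕ) :
    ∏ j ∈ range (2 * n), (1 + (2 * t) ^ 2 / ((j : ℝ) + 1) ^ 2) =
      (∏ k ∈ range n, (1 + (2 * t) ^ 2 / (2 * (k : ℝ) + 1) ^ 2)) *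
        ∏ k ∈ range n, (1 + t ^ 2 / ((k : ℝ) + 1) ^ 2) := by
  rw [prod_range_two_mul, ← prod_mul_distrib]
  refine prod_congr rfl fun k _ => ?_
  push_cast
  congr 2
  field_simp
  ring

theorem Real.tendsto_euler_cosh_prod (x : ℝ) :
    Tendsto (fun n : ℕ => ∏ k ∈ range n, (1 + (2 * x / ((2 * (k : ℝ) + 1) * π)) ^ 2))
      atTop (𝓝 (cosh x)) := by
  rcases eq_or_ne x 0 with rfl | hx
  · simp
  set t := x / π
  have hπt : π * t = x := mul_div_cancel₀ x pi_ne_zero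
  have hdouble : Tendsto (fun n => π * (2 * t) *
      ∏ j ∈ range (2 * n), (1 + (2 * t) ^ 2 / ((j : ℝ) + 1) ^ 2)) atTop
      (𝓝 (sinh (π * (2 * t)))) :=
    (tendsto_euler_sinh_prod (2 * t)).comp (tendsto_id.const_mul_atTop' two_pos)
  have hsinh : sinh (π * t) ≠ 0 := by rwa [hπt, sinh_ne_zero]
  have hquot := hdouble.div ((tendsto_euler_sinh_prod t).const_mul 2)
    (mul_ne_zero two_ne_zero hsinh)
  have hval : sinh (π * (2 * t)) / (2 * sinh (π * t)) = cosh x := by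
    rw [mul_left_comm, sinh_two_mul, hπt]
    field_simp [hsinh]
  rw [hval] at hquot
  refine hquot.congr fun n => ?_
  have hodd : ∀ k : ℕ, 1 + (2 * t) ^ 2 / (2 * (k : ℝ) + 1) ^ 2 =
      1 + (2 * x / ((2 * (k : ℝ) + 1) * π)) ^ 2 := fun k => by
    rw [← hπt]
    field_simp
  have hQ : ∏ k ∈ range n, (1 + t ^ 2 / ((k : ℝ) + 1) ^ 2) ≠ 0 :=
    prod_ne_zero_iff.mpr fun k _ => by positivity
  have ht : t ≠ 0 := div_ne_zero hx pi_ne_zero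
  simp only [Pi.div_apply, prod_range_two_mul_one_add_sq_div_sq, hodd]
  field_simp

theorem stmt_7 (x : ℝ) :
    Multipliable (fun k : ℕ => 1 + (2 * x / ((2 * (k : ℝ) + 1) * π)) ^ 2) ∧
      Real.cosh x = ∏' k : ℕ, (1 + (2 * x / ((2 * (k : ℝ) + 1) * π)) ^ 2) := by
  have hm := Real.multipliable_one_add_of_summable (summable_sq_div_odd_mul_pi x)
  exact ⟨hm, tendsto_nhds_unique (tendsto_euler_cosh_prod x) hm.hasProd.tendsto_prod_nat⟩
end

section
/- For all real x, cosh x · cos x = ∏_{k≥0} (1 - (2x/((2k+1)π))^4). -/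
/-!
Write `S_n(z) = π z ∏_{j<n} (1 - z²/(j+1)²)` for Euler's partial sine products. Expanding
`1 - w²/j² = (j - w)(j + w)/j²` at `w = z + 1/2` shows that `S_n(z + 1/2) / S_n(1/2)` is the
partial cosine product `∏_{k<n} (1 - 4z²/(2k+1)²)` up to the factor `(2n+1+2z)/(2n+1) → 1`;
since `sin(π(z + 1/2)) = cos(πz)` and `sin(π/2) = 1`, this gives Euler's product for `cos(πz)`.
At `z = x/π` and `z = ix/π` (where `cos(ix) = cosh x`) the factors pair up as
`(1 - a)(1 + a) = 1 - a²`, giving the partial products of the theorem; their terms are `O(k⁻⁴)`,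
so the infinite product converges and equals that limit.
-/

open Real
open Finset Filter Topology

lemma two_mul_natCast_add_one_ne_zero {R : Type*} [Semiring R] [CharZero R] (n : ℕ) :
    (2 * n + 1 : R) ≠ 0 := by
  exact_mod_cast (by omega : 2 * n + 1 ≠ 0)

noncomputable def eulerSinPartialProd (z : ℂ) (n : ℕ) : ℂ :=
  π * z * ∏ j ∈ range n, (1 - z ^ 2 / ((j : ℂ) + 1) ^ 2)

lemma eulerSinPartialProd_add_half (z : ℂ) (n : ℕ) :
    eulerSinPartialProd (z + 1 / 2) n * (2 * n + 1) =
      eulerSinPartialProd (1 / 2) n * (∏ k ∈ range n, (1 - 4 * z ^ 2 / (2 * k + 1) ^ 2)) *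
        (2 * n + 1 + 2 * z) := by
  induction n with
  | zero => simp [eulerSinPartialProd]; ring
  | succ n ih =>
    have hodd : (2 * n + 1 : ℂ) ≠ 0 := two_mul_natCast_add_one_ne_zero n
    have step : (2 * n + 3) * (1 - (z + 1 / 2) ^ 2 / ((n : ℂ) + 1) ^ 2) * (2 * n + 1 + 2 * z) =
        (2 * n + 3 + 2 * z) * (1 - (1 / 2) ^ 2 / ((n : ℂ) + 1) ^ 2) *
          (1 - 4 * z ^ 2 / (2 * n + 1) ^ 2) * (2 * n + 1) := by
      field_simp
      ring
    refine mul_right_cancel₀ hodd ?_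
    simp only [eulerSinPartialProd, prod_range_succ, Nat.cast_succ] at ih ⊢
    linear_combination (2 * (n : ℂ) + 3) * (1 - (z + 1 / 2) ^ 2 / ((n : ℂ) + 1) ^ 2) * ih +
      π * (1 / 2) * (∏ j ∈ range n, (1 - (1 / 2) ^ 2 / ((j : ℂ) + 1) ^ 2)) *
        (∏ k ∈ range n, (1 - 4 * z ^ 2 / (2 * (k : ℂ) + 1) ^ 2)) * step

theorem Complex.tendsto_euler_cos_prod (z : ℂ) :
    Tendsto (fun n : ℕ => ∏ k ∈ range n, (1 - 4 * z ^ 2 / (2 * (k : ℂ) + 1) ^ 2)) atTop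
      (𝓝 (Complex.cos (π * z))) := by
  have hshift : Tendsto (eulerSinPartialProd (z + 1 / 2)) atTop
      (𝓝 (Complex.sin (π * (z + 1 / 2)))) := Complex.tendsto_euler_sin_prod _
  rw [mul_add, mul_one_div, Complex.sin_add_pi_div_two] at hshift
  have hhalf : Tendsto (eulerSinPartialProd (1 / 2)) atTop (𝓝 (Complex.sin (π * (1 / 2)))) :=
    Complex.tendsto_euler_sin_prod _
  rw [mul_one_div, Complex.sin_pi_div_two] at hhalf
  have hratio : Tendsto (fun n : ℕ => (2 * n + 1 + 2 * z) / (2 * n + 1)) atTop (𝓝 1) := by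
    convert tendsto_add_mul_div_add_mul_atTop_nhds (1 + 2 * z) 1 2 two_ne_zero using 2 <;> ring
  have hden := hhalf.mul hratio
  rw [mul_one] at hden
  refine ((hshift.div hden one_ne_zero).congr' ?_).trans (by rw [div_one])
  filter_upwards [hden.eventually_ne one_ne_zero] with n hn
  rw [Pi.div_apply, div_eq_iff hn, mul_div_assoc', mul_div_assoc',
    eq_div_iff (two_mul_natCast_add_one_ne_zero n), eulerSinPartialProd_add_half]
  ring

lemma tendsto_prod_one_sub_pow_four (x : ℝ) :
    Tendsto (fun n : ℕ => ∏ k ∈ range n, (1 - (2 * x / ((2 * (k : ℝ) + 1) * π)) ^ 4)) atTop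
      (𝓝 (cosh x * cos x)) := by
  have hpi : (π : ℂ) ≠ 0 := Complex.ofReal_ne_zero.mpr pi_ne_zero
  have hcos := Complex.tendsto_euler_cos_prod (x / π)
  have hcosh := Complex.tendsto_euler_cos_prod (x / π * Complex.I)
  rw [mul_div_cancel₀ _ hpi] at hcos
  rw [← mul_assoc, mul_div_cancel₀ _ hpi, Complex.cos_mul_I] at hcosh
  rw [← tendsto_ofReal_iff]
  push_cast
  refine (hcosh.mul hcos).congr fun n => ?_
  rw [← prod_mul_distrib]
  refine prod_congr rfl fun k _ => ?_
  have hodd : (2 * k + 1 : ℂ) ≠ 0 := two_mul_natCast_add_one_ne_zero k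
  rw [mul_pow, Complex.I_sq]
  field_simp
  ring

lemma summable_inv_two_mul_add_one_pow {p : ℕ} (hp : 1 < p) :
    Summable (fun k : ℕ => ((2 * (k : ℝ) + 1) ^ p)⁻¹) := by
  have hinj : Function.Injective (fun k : ℕ => 2 * k + 1) := fun a b h => by simp only at h; omega
  simpa [Function.comp_def] using (summable_nat_pow_inv.mpr hp).comp_injective hinj

lemma multipliable_one_sub_pow_four (x : ℝ) :
    Multipliable (fun k : ℕ => 1 - (2 * x / ((2 * (k : ℝ) + 1) * π)) ^ 4) := by
  convert Real.multipliable_one_add_of_summable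
    ((summable_inv_two_mul_add_one_pow (by norm_num : 1 < 4)).mul_left (-(2 * x / π) ^ 4))
    using 2 with k
  rw [sub_eq_add_neg, mul_comm _ π, ← div_div, div_pow _ (_ + _), div_eq_mul_inv, neg_mul]

theorem stmt_8 (x : ℝ) :
    Real.cosh x * Real.cos x =
      ∏' k : ℕ, (1 - (2 * x / ((2 * (k : ℝ) + 1) * π)) ^ 4) :=
  ((multipliable_one_sub_pow_four x).hasProd_iff_tendsto_nat.mpr
    (tendsto_prod_one_sub_pow_four x)).tprod_eq.symm
end

section
/- For every positive integer n and real x with |x| < π/2, (1/2^{2n-1}) · (1/(2n-2)!) · d^{2n-2}/dx^{2n-2} (tan x) = ∑_{k≥0} (1/((2k+1)π - 2x)^{2n-1} - 1/((2k+1)π + 2x)^{2n-1}). -/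
/-!
Putting `t = 1/2 - x/π` into the partial fraction expansion of `π cot (π t)` and telescoping gives
`tan x / 2 = ∑ₖ (1/((2k+1)π - 2x) - 1/((2k+1)π + 2x))`. This series may be differentiated
termwise as often as we like: on `|y| ≤ b < π/2` the differentiated terms are bounded by a
multiple of `1/(k+1)²`, uniformly in `y`.
-/

open Real Filter Topology

theorem hasSum_sub_of_hasSum_succ_sub {G : Type*} [AddCommGroup G] [TopologicalSpace G]
    [IsTopologicalAddGroup G] [T2Space G] {a b : ℕ → G} {s : G}
    (ha : Tendsto a atTop (𝓝 0)) (hab : Summable fun n ↦ a n - b n)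
    (h : HasSum (fun n ↦ a (n + 1) - b n) s) : HasSum (fun n ↦ a n - b n) (a 0 + s) := by
  have hpartial : ∀ N, ∑ i ∈ Finset.range N, (a i - b i) =
      a 0 + ∑ i ∈ Finset.range N, (a (i + 1) - b i) - a N := by
    intro N
    induction N with
    | zero => simp
    | succ N ih => rw [Finset.sum_range_succ, Finset.sum_range_succ, ih]; abel
  rw [hab.hasSum_iff_tendsto_nat]
  simpa [hpartial] using (tendsto_const_nhds.add h.tendsto_sum_nat).sub ha

theorem Real.hasSum_cot_series {t : ℝ} (ht : ∀ n : ℤ, (n : ℝ) ≠ t) :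
    HasSum (fun n : ℕ ↦ 1 / (t - (n + 1)) + 1 / (t + (n + 1))) (π * cot (π * t) - 1 / t) := by
  have hz : (t : ℂ) ∈ Complex.integerComplement := by
    rintro ⟨n, hn⟩
    exact ht n (by exact_mod_cast hn)
  rw [← Complex.hasSum_ofReal]
  push_cast
  rw [cot_series_rep' hz]
  exact (summable_cotTerm hz).hasSum

theorem summable_one_div_nat_add_one_sq : Summable fun k : ℕ ↦ 1 / ((k : ℝ) + 1) ^ 2 := by
  exact_mod_cast (summable_nat_add_iff 1).2 (Real.summable_one_div_nat_pow.2 one_lt_two)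

theorem hasDerivAt_one_div_add_mul_pow (c a : ℝ) (m : ℕ) {y : ℝ} (hy : c + a * y ≠ 0) :
    HasDerivAt (fun y ↦ 1 / (c + a * y) ^ (m + 1)) (-(m + 1) * a / (c + a * y) ^ (m + 2)) y := by
  simp only [one_div]
  refine ((((hasDerivAt_id' y).const_mul a).const_add c).fun_pow (m + 1)).fun_inv
    (pow_ne_zero _ hy) |>.congr_deriv ?_
  rw [Nat.add_sub_cancel]
  field_simp
  push_cast
  ring

/-- The `m`-th derivative of `1/((2k+1)π - 2y) - 1/((2k+1)π + 2y)`, divided by `2 ^ m * m!`. -/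
noncomputable def tanTerm (m k : ℕ) (y : ℝ) : ℝ :=
  1 / ((2 * k + 1) * π - 2 * y) ^ (m + 1) - (-1) ^ m / ((2 * k + 1) * π + 2 * y) ^ (m + 1)

section Denominators

variable {b y : ℝ} (hy : |y| ≤ b) (k : ℕ)
include hy

theorem odd_mul_pi_sub_le_sub :
    (2 * k + 1) * (π - 2 * b) ≤ (2 * k + 1) * π - 2 * y := by
  have hk : (0 : ℝ) ≤ k := k.cast_nonneg
  nlinarith [le_abs_self y, abs_nonneg y]

theorem odd_mul_pi_sub_le_add :
    (2 * k + 1) * (π - 2 * b) ≤ (2 * k + 1) * π + 2 * y := by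
  simpa using odd_mul_pi_sub_le_sub (y := -y) (by rwa [abs_neg]) k

end Denominators

section Positivity

variable {y : ℝ} (hy : |y| < π / 2) (k : ℕ)
include hy

theorem odd_mul_pi_sub_two_mul_pos : 0 < (2 * k + 1) * π - 2 * y :=
  (mul_pos (by positivity) (by linarith)).trans_le (odd_mul_pi_sub_le_sub le_rfl k)

theorem odd_mul_pi_add_two_mul_pos : 0 < (2 * k + 1) * π + 2 * y :=
  (mul_pos (by positivity) (by linarith)).trans_le (odd_mul_pi_sub_le_add le_rfl k)

end Positivity

theorem hasDerivAt_tanTerm (m k : ℕ) {y : ℝ} (hy : |y| < π / 2) :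
    HasDerivAt (tanTerm m k) (2 * (m + 1) * tanTerm (m + 1) k y) y := by
  have hform : tanTerm m k = fun y ↦ 1 / ((2 * k + 1) * π + -2 * y) ^ (m + 1) -
      (-1) ^ m * (1 / ((2 * k + 1) * π + 2 * y) ^ (m + 1)) := by
    funext y
    simp only [tanTerm]
    ring
  have h₁ : (2 * k + 1) * π + -2 * y ≠ 0 := by
    rw [neg_mul, ← sub_eq_add_neg]
    exact (odd_mul_pi_sub_two_mul_pos hy k).ne'
  rw [hform]
  refine (hasDerivAt_one_div_add_mul_pow _ _ m h₁).fun_sub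
    ((hasDerivAt_one_div_add_mul_pow _ _ m (odd_mul_pi_add_two_mul_pos hy k).ne').const_mul
      ((-1 : ℝ) ^ m)) |>.congr_deriv ?_
  simp only [tanTerm, neg_mul, ← sub_eq_add_neg]
  ring

theorem one_div_pow_le_of_odd_mul_le {d D : ℝ} (hd : 0 < d) (k m : ℕ)
    (hD : (2 * k + 1) * d ≤ D) : 1 / D ^ (m + 2) ≤ 1 / ((k + 1) ^ 2 * d ^ (m + 2)) := by
  have hk : (1 : ℝ) ≤ 2 * k + 1 := by linarith [(k.cast_nonneg : (0 : ℝ) ≤ k)]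
  apply one_div_le_one_div_of_le (by positivity)
  calc ((k : ℝ) + 1) ^ 2 * d ^ (m + 2) ≤ (2 * (k : ℝ) + 1) ^ (m + 2) * d ^ (m + 2) := by
        gcongr
        calc ((k : ℝ) + 1) ^ 2 ≤ (2 * (k : ℝ) + 1) ^ 2 := by gcongr; linarith
          _ ≤ (2 * (k : ℝ) + 1) ^ (m + 2) := pow_le_pow_right₀ hk (by omega)
    _ = ((2 * k + 1) * d) ^ (m + 2) := (mul_pow _ _ _).symm
    _ ≤ D ^ (m + 2) := by gcongr

theorem abs_tanTerm_succ_le {b y : ℝ} (hb : b < π / 2) (hy : |y| ≤ b) (m k : ℕ) :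
    |tanTerm (m + 1) k y| ≤ 2 / (π - 2 * b) ^ (m + 2) * (1 / ((k : ℝ) + 1) ^ 2) := by
  have hd : 0 < π - 2 * b := by linarith
  have h₁ := odd_mul_pi_sub_le_sub hy k
  have h₂ := odd_mul_pi_sub_le_add hy k
  have hD₁ : 0 < (2 * k + 1) * π - 2 * y := (mul_pos (by positivity) hd).trans_le h₁
  have hD₂ : 0 < (2 * k + 1) * π + 2 * y := (mul_pos (by positivity) hd).trans_le h₂
  calc |tanTerm (m + 1) k y|
      ≤ 1 / ((2 * k + 1) * π - 2 * y) ^ (m + 2) + 1 / ((2 * k + 1) * π + 2 * y) ^ (m + 2) := by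
        refine (abs_sub _ _).trans_eq ?_
        simp only [abs_div, abs_pow, abs_neg, abs_one, one_pow, abs_of_pos hD₁, abs_of_pos hD₂]
    _ ≤ 1 / ((k + 1) ^ 2 * (π - 2 * b) ^ (m + 2)) + 1 / ((k + 1) ^ 2 * (π - 2 * b) ^ (m + 2)) :=
        add_le_add (one_div_pow_le_of_odd_mul_le hd k m h₁) (one_div_pow_le_of_odd_mul_le hd k m h₂)
    _ = 2 / (π - 2 * b) ^ (m + 2) * (1 / ((k : ℝ) + 1) ^ 2) := by field_simp; ring

theorem norm_two_mul_tanTerm_succ_le {b : ℝ} (hb : b < π / 2) (m : ℕ) {y : ℝ}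
    (hy : y ∈ Set.Ioo (-b) b) (k : ℕ) :
    ‖2 * (m + 1) * tanTerm (m + 1) k y‖ ≤
      2 * (m + 1) * (2 / (π - 2 * b) ^ (m + 2) * (1 / ((k : ℝ) + 1) ^ 2)) := by
  rw [norm_mul, Real.norm_of_nonneg (by positivity), Real.norm_eq_abs]
  gcongr
  exact abs_tanTerm_succ_le hb (abs_le.2 ⟨hy.1.le, hy.2.le⟩) m k

theorem summable_two_mul_tanTerm_majorant (m : ℕ) (b : ℝ) :
    Summable fun k : ℕ ↦ 2 * (m + 1) * (2 / (π - 2 * b) ^ (m + 2) * (1 / ((k : ℝ) + 1) ^ 2)) :=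
  (summable_one_div_nat_add_one_sq.mul_left _).mul_left _

theorem abs_lt_pi_div_two_of_mem_Ioo {b y : ℝ} (hb : b < π / 2) (hy : y ∈ Set.Ioo (-b) b) :
    |y| < π / 2 :=
  abs_lt.2 ⟨by linarith [hy.1], by linarith [hy.2]⟩

theorem hasDerivAt_tsum_tanTerm {b y₀ y : ℝ} (hb : b < π / 2) (m : ℕ)
    (hy₀ : y₀ ∈ Set.Ioo (-b) b) (h₀ : Summable (tanTerm m · y₀)) (hy : y ∈ Set.Ioo (-b) b) :
    HasDerivAt (fun z ↦ ∑' k, tanTerm m k z) (∑' k, 2 * (m + 1) * tanTerm (m + 1) k y) y :=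
  hasDerivAt_tsum_of_isPreconnected (summable_two_mul_tanTerm_majorant m b) isOpen_Ioo
    isPreconnected_Ioo (fun k _ hz ↦ hasDerivAt_tanTerm m k (abs_lt_pi_div_two_of_mem_Ioo hb hz))
    (fun k _ hz ↦ norm_two_mul_tanTerm_succ_le hb m hz k) hy₀ h₀ hy

theorem summable_tanTerm (m : ℕ) {x : ℝ} (hx : |x| < π / 2) : Summable (tanTerm m · x) := by
  cases m with
  | zero =>
    -- The series vanishes termwise at `0`, and the summable bound on the derivatives
    -- propagates summability along the interval.
    obtain ⟨b, hxb, hb⟩ := exists_between hx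
    have hb₀ : (0 : ℝ) ∈ Set.Ioo (-b) b := ⟨by linarith [abs_nonneg x], by linarith [abs_nonneg x]⟩
    refine summable_of_summable_hasDerivAt_of_isPreconnected
      (summable_two_mul_tanTerm_majorant 0 b) isOpen_Ioo isPreconnected_Ioo
      (fun k _ hz ↦ hasDerivAt_tanTerm 0 k (abs_lt_pi_div_two_of_mem_Ioo hb hz))
      (fun k _ hz ↦ norm_two_mul_tanTerm_succ_le hb 0 hz k) hb₀ ?_ (abs_lt.1 hxb)
    simp [tanTerm]
  | succ m =>
    exact .of_norm_bounded (summable_one_div_nat_add_one_sq.mul_left _)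
      fun k ↦ abs_tanTerm_succ_le hx le_rfl m k

theorem hasSum_tan_series_shifted {x : ℝ} (hx : |x| < π / 2) :
    HasSum (fun n : ℕ ↦ 1 / ((2 * n + 3) * π - 2 * x) - 1 / ((2 * n + 1) * π + 2 * x))
      (tan x / 2 - 1 / (π - 2 * x)) := by
  have hπ := pi_pos
  have hx' := abs_lt.1 hx
  set t := 1 / 2 - x / π with ht
  have hcot := Real.hasSum_cot_series (t := t) fun n hn ↦ by
    have h₀ : (0 : ℝ) < n := by
      rw [hn, sub_pos, div_lt_iff₀ hπ]; linarith
    have h₁ : (n : ℝ) < 1 := by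
      rw [hn, sub_lt_iff_lt_add, ← sub_lt_iff_lt_add', lt_div_iff₀ hπ]; linarith
    norm_cast at h₀ h₁
    omega
  have hsub : ∀ n : ℕ, 1 / (t - (n + 1)) = 2 * π * -(1 / ((2 * n + 1) * π + 2 * x)) := by
    intro n
    have h := (odd_mul_pi_add_two_mul_pos hx n).ne'
    rw [show t - (n + 1) = -((2 * n + 1) * π + 2 * x) / (2 * π) by rw [ht]; field_simp; ring]
    field_simp
  have hadd : ∀ n : ℕ, 1 / (t + (n + 1)) = 2 * π * (1 / ((2 * n + 3) * π - 2 * x)) := by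
    intro n
    have h : (2 * n + 3) * π - 2 * x ≠ 0 := by
      have := odd_mul_pi_sub_two_mul_pos hx (n + 1)
      push_cast at this
      linarith
    rw [show t + (n + 1) = ((2 * n + 3) * π - 2 * x) / (2 * π) by rw [ht]; field_simp; ring]
    field_simp
  have hsum : π * cot (π * t) - 1 / t = 2 * π * (tan x / 2 - 1 / (π - 2 * x)) := by
    have h : π - 2 * x ≠ 0 := by linarith
    rw [show π * t = π / 2 - x by rw [ht]; field_simp, cot_eq_cos_div_sin, cos_pi_div_two_sub,
      sin_pi_div_two_sub, ← tan_eq_sin_div_cos, show t = (π - 2 * x) / (2 * π) by rw [ht]; field_simp]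
    field_simp
  simp only [hsub, hadd, hsum, ← mul_add, neg_add_eq_sub] at hcot
  exact (hasSum_mul_left_iff two_pi_pos.ne').1 hcot

theorem hasSum_tanTerm_zero {x : ℝ} (hx : |x| < π / 2) :
    HasSum (tanTerm 0 · x) (tan x / 2) := by
  set a : ℕ → ℝ := fun k ↦ 1 / ((2 * k + 1) * π - 2 * x)
  set b : ℕ → ℝ := fun k ↦ 1 / ((2 * k + 1) * π + 2 * x)
  have hterm : (tanTerm 0 · x) = fun k ↦ a k - b k := by
    funext k
    simp [tanTerm, a, b]
  -- The cotangent series pairs `a (n + 1)` with `b n`; telescoping realigns it.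
  have hshift : HasSum (fun n ↦ a (n + 1) - b n) (tan x / 2 - a 0) := by
    convert hasSum_tan_series_shifted hx using 4 <;> push_cast <;> ring
  have ha : Tendsto a atTop (𝓝 0) := by
    refine tendsto_const_nhds.div_atTop (tendsto_atTop_add_const_right _ _ ?_)
    exact (tendsto_natCast_atTop_atTop.const_mul_atTop two_pos |>.atTop_add
      tendsto_const_nhds).atTop_mul_const pi_pos
  have := hasSum_sub_of_hasSum_succ_sub ha (hterm ▸ summable_tanTerm 0 hx) hshift
  rw [hterm]
  simpa using this

theorem hasSum_tanTerm (m : ℕ) {x : ℝ} (hx : |x| < π / 2) :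
    HasSum (tanTerm m · x) (iteratedDeriv m tan x / (2 ^ (m + 1) * m.factorial)) := by
  induction m generalizing x with
  | zero => simpa using hasSum_tanTerm_zero hx
  | succ m ih =>
    obtain ⟨b, hxb, hb⟩ := exists_between hx
    have hxI : x ∈ Set.Ioo (-b) b := abs_lt.1 hxb
    have hloc : (fun z ↦ ∑' k, tanTerm m k z) =ᶠ[𝓝 x]
        fun z ↦ iteratedDeriv m tan z / (2 ^ (m + 1) * m.factorial) := by
      filter_upwards [(isOpen_lt continuous_abs continuous_const).mem_nhds hx] with z hz
      exact (ih hz).tsum_eq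
    have hderiv := (hasDerivAt_tsum_tanTerm hb m hxI (ih hx).summable hxI).congr_of_eventuallyEq
      hloc.symm
    rw [tsum_mul_left] at hderiv
    have hiter : iteratedDeriv (m + 1) tan x =
        2 ^ (m + 1) * m.factorial * (2 * (m + 1) * ∑' k, tanTerm (m + 1) k x) := by
      rw [iteratedDeriv_succ, ← hderiv.deriv, deriv_div_const]
      field_simp
    rw [hiter, Nat.factorial_succ]
    convert (summable_tanTerm (m + 1) hx).hasSum using 1
    push_cast
    field_simp
    ring

theorem stmt_12 (n : ℕ) (hn : 0 < n) (x : ℝ) (hx : |x| < π / 2) :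
    (1 / 2 ^ (2 * n - 1)) * (1 / (Nat.factorial (2 * n - 2))) *
        iteratedDeriv (2 * n - 2) Real.tan x =
      ∑' k : ℕ, (1 / ((2 * (k : ℝ) + 1) * π - 2 * x) ^ (2 * n - 1) -
        1 / ((2 * (k : ℝ) + 1) * π + 2 * x) ^ (2 * n - 1)) := by
  have hodd : 2 * n - 2 + 1 = 2 * n - 1 := by omega
  have heven : (-1 : ℝ) ^ (2 * n - 2) = 1 := Even.neg_one_pow ⟨n - 1, by omega⟩
  have h := (hasSum_tanTerm (2 * n - 2) hx).tsum_eq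
  simp only [tanTerm, hodd, heven] at h
  rw [h]
  ring
end

section
/- For all real x with |x| < π/2, sec^2 x = 8 · ∑_{k≥0} ((2k+1)^2 π^2 + 4x^2)/(((2k+1)^2 π^2 - 4x^2)^2). -/
/-!
With `y = x + π / 2` one has `sec² x = csc² y`. Iterating the duplication formula
`csc² (2u) = (csc² u + sec² u) / 4` gives `csc² y = ∑_{j < 2^n} 4^{-n} csc² ((y + jπ) / 2^n)` for
every `n`. As `n → ∞` the terms indexed by `k` and `2^n - 1 - k` tend to `(y + kπ)⁻²` and
`((k + 1)π - y)⁻²`, and Jordan's inequality `sin t ≥ 2t / π` dominates them by a summable series,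
so Tannery's theorem yields `csc² y = ∑ₖ ((y + kπ)⁻² + ((k + 1)π - y)⁻²)`, which is the claimed
series term by term.
-/

open Real Filter Topology

noncomputable def dyadicCscSq (n : ℕ) (a : ℝ) : ℝ := ((2 ^ n * sin (a / 2 ^ n)) ^ 2)⁻¹

lemma inv_sin_sq_two_mul {u : ℝ} (h : sin (2 * u) ≠ 0) :
    (sin (2 * u) ^ 2)⁻¹ = ((2 * sin u) ^ 2)⁻¹ + ((2 * cos u) ^ 2)⁻¹ := by
  rw [sin_two_mul] at h ⊢
  have hs : sin u ≠ 0 := by rintro hs; simp [hs] at h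
  have hc : cos u ≠ 0 := by rintro hc; simp [hc] at h
  field_simp
  exact (cos_sq_add_sin_sq u).symm

lemma sin_div_two_pow_ne_zero {a : ℝ} (h : sin a ≠ 0) (n : ℕ) : sin (a / 2 ^ n) ≠ 0 := by
  induction n with
  | zero => simpa using h
  | succ n ih =>
    intro h0
    apply ih
    rw [show a / 2 ^ n = 2 * (a / 2 ^ (n + 1)) by rw [pow_succ]; field_simp, sin_two_mul, h0]
    ring

lemma dyadicCscSq_eq_add {n : ℕ} {a : ℝ} (h : sin (a / 2 ^ n) ≠ 0) :
    dyadicCscSq n a = dyadicCscSq (n + 1) a + dyadicCscSq (n + 1) (a + 2 ^ n * π) := by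
  set u := a / 2 ^ (n + 1) with hu
  have ha : a / 2 ^ n = 2 * u := by rw [hu, pow_succ]; field_simp
  have hb : (a + 2 ^ n * π) / 2 ^ (n + 1) = u + π / 2 := by rw [hu, pow_succ]; field_simp
  rw [ha] at h
  simp only [dyadicCscSq, ha, hb, sin_add_pi_div_two, mul_pow, mul_inv, inv_sin_sq_two_mul h]
  rw [pow_succ]
  ring

lemma dyadicCscSq_two_pow_mul_pi_sub (n : ℕ) (a : ℝ) :
    dyadicCscSq n (2 ^ n * π - a) = dyadicCscSq n a := by
  rw [dyadicCscSq, dyadicCscSq, show (2 ^ n * π - a) / 2 ^ n = π - a / 2 ^ n by field_simp,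
    sin_pi_sub]

lemma inv_sin_sq_eq_sum_dyadicCscSq {y : ℝ} (hy : sin y ≠ 0) (n : ℕ) :
    (sin y ^ 2)⁻¹ = ∑ j ∈ Finset.range (2 ^ n), dyadicCscSq n (y + j * π) := by
  induction n with
  | zero => simp [dyadicCscSq]
  | succ n ih =>
    have hj (j : ℕ) : sin ((y + j * π) / 2 ^ n) ≠ 0 :=
      sin_div_two_pow_ne_zero (by simpa [sin_add_nat_mul_pi] using hy) n
    rw [ih, pow_succ, mul_two, Finset.sum_range_add, ← Finset.sum_add_distrib]
    refine Finset.sum_congr rfl fun j _ => ?_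
    rw [dyadicCscSq_eq_add (hj j)]
    push_cast
    ring_nf

lemma inv_sin_sq_eq_sum_dyadicCscSq_pairs {y : ℝ} (hy : sin y ≠ 0) (n : ℕ) :
    (sin y ^ 2)⁻¹ = ∑ k ∈ Finset.range (2 ^ n),
      (dyadicCscSq (n + 1) (y + k * π) + dyadicCscSq (n + 1) ((k + 1) * π - y)) := by
  rw [inv_sin_sq_eq_sum_dyadicCscSq hy (n + 1), pow_succ, mul_two, Finset.sum_range_add,
    Finset.sum_add_distrib,
    ← Finset.sum_range_reflect (fun k : ℕ => dyadicCscSq (n + 1) ((k + 1) * π - y))]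
  congr 1
  refine Finset.sum_congr rfl fun k hk => ?_
  rw [← dyadicCscSq_two_pow_mul_pi_sub (n + 1)]
  congr 1
  rw [Finset.mem_range] at hk
  rw [Nat.cast_sub (by omega), Nat.cast_sub (by omega), pow_succ]
  push_cast
  ring

lemma tendsto_dyadicCscSq {a : ℝ} (ha : a ≠ 0) :
    Tendsto (fun n => dyadicCscSq n a) atTop (𝓝 (a ^ 2)⁻¹) := by
  have hsinc (n : ℕ) : dyadicCscSq n a = ((a * sinc (a / 2 ^ n)) ^ 2)⁻¹ := by
    rw [dyadicCscSq, sinc_of_ne_zero (by positivity)]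
    field_simp
  have hlim : Tendsto (fun n : ℕ => a / 2 ^ n) atTop (𝓝 0) :=
    tendsto_const_nhds.div_atTop (tendsto_pow_atTop_atTop_of_one_lt one_lt_two)
  have := ((continuous_sinc.tendsto 0).comp hlim).const_mul a
  simp only [Function.comp_def, sinc_zero, mul_one] at this
  simpa only [hsinc] using (this.pow 2).inv₀ (pow_ne_zero 2 ha)

lemma dyadicCscSq_le {n : ℕ} {a : ℝ} (h₀ : 0 ≤ a) (h₁ : a ≤ 2 ^ n * (π / 2)) :
    dyadicCscSq n a ≤ (π / 2) ^ 2 * (a ^ 2)⁻¹ := by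
  rcases h₀.eq_or_lt with rfl | ha
  · simp [dyadicCscSq]
  have ht : a / 2 ^ n ≤ π / 2 := by rw [div_le_iff₀ (by positivity)]; linarith
  have hjordan : 2 / π * (a / 2 ^ n) ≤ sin (a / 2 ^ n) := mul_le_sin (by positivity) ht
  have hpos : 0 < 2 / π * a := by positivity
  calc dyadicCscSq n a ≤ ((2 / π * a) ^ 2)⁻¹ := by
        have := mul_le_mul_of_nonneg_left hjordan (pow_nonneg zero_le_two n)
        refine inv_anti₀ (by positivity) (pow_le_pow_left₀ hpos.le ?_ 2)
        convert this using 1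
        field_simp
    _ = (π / 2) ^ 2 * (a ^ 2)⁻¹ := by field_simp

lemma summable_inv_sq_add_nat_mul (a : ℝ) {b : ℝ} (hb : b ≠ 0) :
    Summable fun k : ℕ => ((a + k * b) ^ 2)⁻¹ := by
  have h := ((Real.summable_one_div_nat_add_rpow (a / b) 2).mpr one_lt_two).mul_left (b ^ 2)⁻¹
  refine h.congr fun k => ?_
  rw [Real.rpow_two, sq_abs, one_div, ← mul_inv, ← mul_pow]
  congr 2
  field_simp
  ring

lemma inv_sin_sq_eq_tsum {y : ℝ} (h₀ : 0 < y) (h₁ : y < π) :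
    (sin y ^ 2)⁻¹ = ∑' k : ℕ, (((y + k * π) ^ 2)⁻¹ + (((k + 1) * π - y) ^ 2)⁻¹) := by
  have hπ := pi_pos
  have hfst (k : ℕ) : 0 < y + k * π := by positivity
  have hsnd (k : ℕ) : 0 < (k + 1) * π - y := by nlinarith [(k.cast_nonneg : (0 : ℝ) ≤ k)]
  let f (n k : ℕ) : ℝ := if k < 2 ^ n then
    dyadicCscSq (n + 1) (y + k * π) + dyadicCscSq (n + 1) ((k + 1) * π - y) else 0
  have hf (n : ℕ) : ∑' k, f n k = (sin y ^ 2)⁻¹ := by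
    rw [tsum_eq_sum (s := Finset.range (2 ^ n)) fun k hk => if_neg (by simpa using hk),
      inv_sin_sq_eq_sum_dyadicCscSq_pairs (sin_pos_of_pos_of_lt_pi h₀ h₁).ne']
    exact Finset.sum_congr rfl fun k hk => if_pos (Finset.mem_range.mp hk)
  have hlim (k : ℕ) : Tendsto (f · k) atTop
      (𝓝 (((y + k * π) ^ 2)⁻¹ + (((k + 1) * π - y) ^ 2)⁻¹)) := by
    refine ((tendsto_dyadicCscSq (hfst k).ne').add (tendsto_dyadicCscSq (hsnd k).ne')).comp
      (tendsto_add_atTop_nat 1) |>.congr' ?_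
    filter_upwards [eventually_ge_atTop k] with n hn
    exact (if_pos (hn.trans_lt n.lt_two_pow_self)).symm
  have hbound (n k : ℕ) : ‖f n k‖ ≤
      (π / 2) ^ 2 * ((y + k * π) ^ 2)⁻¹ + (π / 2) ^ 2 * (((k + 1) * π - y) ^ 2)⁻¹ := by
    by_cases hk : k < 2 ^ n
    · have hk' : (k : ℝ) + 1 ≤ 2 ^ n := by exact_mod_cast hk
      have hπ' : 2 ^ (n + 1) * (π / 2) = 2 ^ n * π := by ring
      rw [show f n k = _ from if_pos hk, Real.norm_eq_abs, abs_of_nonneg (by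
        unfold dyadicCscSq; positivity)]
      gcongr <;> apply dyadicCscSq_le <;> nlinarith [hfst k, hsnd k]
    · rw [show f n k = 0 from if_neg hk, norm_zero]
      positivity
  have hsum : Summable fun k : ℕ =>
      (π / 2) ^ 2 * ((y + k * π) ^ 2)⁻¹ + (π / 2) ^ 2 * (((k + 1) * π - y) ^ 2)⁻¹ := by
    refine ((summable_inv_sq_add_nat_mul y hπ.ne').mul_left _).add
      (((summable_inv_sq_add_nat_mul (π - y) hπ.ne').mul_left ((π / 2) ^ 2)).congr fun k => ?_)
    rw [show π - y + k * π = (k + 1) * π - y by ring]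
  exact tendsto_nhds_unique (by simp only [hf, tendsto_const_nhds])
    (tendsto_tsum_of_dominated_convergence hsum hlim (Eventually.of_forall hbound))

lemma inv_sq_add_inv_sq_sub {c x : ℝ} (h₁ : c / 2 + x ≠ 0) (h₂ : c / 2 - x ≠ 0) :
    ((c / 2 + x) ^ 2)⁻¹ + ((c / 2 - x) ^ 2)⁻¹ =
      8 * ((c ^ 2 + 4 * x ^ 2) / (c ^ 2 - 4 * x ^ 2) ^ 2) := by
  have h : c ^ 2 - 4 * x ^ 2 = 4 * ((c / 2 + x) * (c / 2 - x)) := by ring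
  rw [h, ← one_div, ← one_div, div_add_div _ _ (pow_ne_zero 2 h₁) (pow_ne_zero 2 h₂),
    mul_div_assoc', div_eq_div_iff (by simp [h₁, h₂]) (by simp [h₁, h₂])]
  ring

theorem stmt_14 (x : ℝ) (hx : |x| < π / 2) :
    (1 / Real.cos x) ^ 2 =
      8 * ∑' k : ℕ, ((2 * (k : ℝ) + 1) ^ 2 * π ^ 2 + 4 * x ^ 2) /
        ((2 * (k : ℝ) + 1) ^ 2 * π ^ 2 - 4 * x ^ 2) ^ 2 := by
  obtain ⟨hx₁, hx₂⟩ := abs_lt.mp hx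
  rw [div_pow, one_pow, one_div, ← sin_add_pi_div_two,
    inv_sin_sq_eq_tsum (by linarith) (by linarith), ← tsum_mul_left]
  refine tsum_congr fun k => ?_
  have hk : π / 2 ≤ (2 * k + 1) * π / 2 := by nlinarith [pi_pos, (k.cast_nonneg : (0 : ℝ) ≤ k)]
  rw [show x + π / 2 + k * π = (2 * k + 1) * π / 2 + x by ring,
    show (k + 1) * π - (x + π / 2) = (2 * k + 1) * π / 2 - x by ring,
    inv_sq_add_inv_sq_sub (by linarith) (by linarith), mul_pow]
end

section
/- π^2 = 8 · ∑_{k≥0} (4 + (2k+1)^2)/((4 - (2k+1)^2)^2), where the k = 0 term is (4+1)/(4-1)^2 = 5/9. -/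
/-!
With `n = 2k + 1`, partial fractions give
`(4 + n²) / (4 - n²)² = ((n - 2)⁻² + (n + 2)⁻²) / 2`, so the series is the mean of the sums of
`1 / (2k - 1)²` and `1 / (2k + 3)²`. Both are the odd-square series `∑ 1 / (2k + 1)² = π² / 8`
(the odd part of `ζ(2) = π² / 6`) shifted by one term either way, so they equal `π² / 8 ± 1`.
-/

open Real

lemma hasSum_one_div_odd_sq :
    HasSum (fun k : ℕ => 1 / (2 * (k : ℝ) + 1) ^ 2) (π ^ 2 / 8) := by
  have heven : HasSum (fun k : ℕ => 1 / ((2 * k : ℕ) : ℝ) ^ 2) (π ^ 2 / 24) := by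
    have h := hasSum_zeta_two.mul_left (1 / 4)
    rw [show (1 : ℝ) / 4 * (π ^ 2 / 6) = π ^ 2 / 24 by ring] at h
    refine h.congr_fun fun k => ?_
    push_cast
    rw [mul_pow, one_div_mul_one_div]
    norm_num
  have hinj : Function.Injective fun k : ℕ => 2 * k + 1 := fun a b h => by
    simp only at h; omega
  obtain ⟨S, hodd⟩ := hasSum_zeta_two.summable.comp_injective hinj
  have hS : S = π ^ 2 / 8 := by
    have := (HasSum.even_add_odd (f := fun n : ℕ => 1 / (n : ℝ) ^ 2) heven hodd).unique
      hasSum_zeta_two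
    linarith
  subst hS
  exact hodd.congr_fun fun k => by simp

lemma sq_add_sq_div_sq_sub_sq_sq {a n : ℝ} (h₁ : n - a ≠ 0) (h₂ : n + a ≠ 0) :
    (a ^ 2 + n ^ 2) / (a ^ 2 - n ^ 2) ^ 2 = (1 / (n - a) ^ 2 + 1 / (n + a) ^ 2) / 2 := by
  rw [show a ^ 2 - n ^ 2 = -((n - a) * (n + a)) by ring]
  field_simp
  ring

lemma hasSum_one_div_two_mul_sub_one_sq :
    HasSum (fun k : ℕ => 1 / (2 * (k : ℝ) - 1) ^ 2) (π ^ 2 / 8 + 1) := by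
  have hshift := (hasSum_nat_add_iff (f := fun k : ℕ => 1 / (2 * (k : ℝ) - 1) ^ 2) 1).mp
    (hasSum_one_div_odd_sq.congr_fun fun k => by push_cast; ring_nf)
  simpa [add_comm] using hshift

lemma hasSum_one_div_two_mul_add_three_sq :
    HasSum (fun k : ℕ => 1 / (2 * (k : ℝ) + 3) ^ 2) (π ^ 2 / 8 - 1) := by
  have hshift := (hasSum_nat_add_iff' 1).mpr hasSum_one_div_odd_sq
  norm_num at hshift
  exact hshift.congr_fun fun k => by ring_nf

theorem stmt_15 :
    π ^ 2 = 8 * ∑' k : ℕ, (4 + (2 * (k : ℝ) + 1) ^ 2) /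
      (4 - (2 * (k : ℝ) + 1) ^ 2) ^ 2 := by
  have hterm (k : ℕ) : (4 + (2 * (k : ℝ) + 1) ^ 2) / (4 - (2 * (k : ℝ) + 1) ^ 2) ^ 2 =
      (1 / (2 * (k : ℝ) - 1) ^ 2 + 1 / (2 * (k : ℝ) + 3) ^ 2) / 2 := by
    have h₁ : 2 * (k : ℝ) + 1 - 2 ≠ 0 := by
      rcases k with _ | k
      · norm_num
      · push_cast; linarith [k.cast_nonneg (α := ℝ)]
    have h := sq_add_sq_div_sq_sub_sq_sq h₁ (by positivity)
    norm_num at h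
    rw [h]
    ring_nf
  have hsum := (hasSum_one_div_two_mul_sub_one_sq.add
    hasSum_one_div_two_mul_add_three_sq).div_const 2
  simp_rw [hterm, hsum.tsum_eq]
  ring
end

section
/- For every integer n, π^2 = 8(2n+1)^2 · cos^2(π/(2n+1)) · ∑_{k≥0} (4 + (2n+1)^2 (2k+1)^2)/((4 - (2n+1)^2 (2k+1)^2)^2). -/
/-!
Parseval's identity for `x ↦ exp (2πitx)` on `(0, 1]`, whose Fourier coefficients are
`(exp (2πit) - 1) / (2πi (t - n))`, gives `∑_{n ∈ ℤ} 1 / (t - n)² = π² / sin² (πt)` for `t ∉ ℤ`.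
Taking `t = -(1 + s) / 2` sums `1 / (2j + 1 + s)²` over `j ∈ ℤ` to `π² / (4 cos² (πs/2))`,
and folding `ℤ` onto `ℕ` pairs `1 / (c + s)²` with `1 / (c - s)²` for odd `c > 0`.
For `s = 2 / M` this pair is `2M² (4 + M²c²) / (4 - M²c²)²`. When `M = 2n + 1`, the product
of `M` with an odd integer is never `2`, so `s` is never an odd integer and neither the
denominators nor `cos (π / M)` vanish.
-/

open Real MeasureTheory

lemma fourierCoeffOn_exp_mul {t : ℝ} {n : ℤ} (hn : t ≠ n) :
    fourierCoeffOn zero_lt_one (fun x : ℝ => Complex.exp (2 * π * Complex.I * t * x)) n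
      = (Complex.exp (2 * π * Complex.I * t) - 1) / (2 * π * Complex.I * (t - n)) := by
  have hc : 2 * π * Complex.I * (t - n) ≠ 0 := by
    have : (t : ℂ) - n ≠ 0 := sub_ne_zero.mpr (by exact_mod_cast hn)
    simp [Real.pi_ne_zero, Complex.I_ne_zero, this]
  have hexp : ∀ x : ℝ, fourier (-n) (x : AddCircle (1 - 0 : ℝ)) •
      Complex.exp (2 * π * Complex.I * t * x) = Complex.exp (2 * π * Complex.I * (t - n) * x) := by
    intro x
    rw [fourier_coe_apply, smul_eq_mul, ← Complex.exp_add]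
    congr 1
    push_cast
    ring
  simp_rw [fourierCoeffOn_eq_integral _ _ zero_lt_one, hexp, integral_exp_mul_complex hc]
  have hper : Complex.exp (2 * π * Complex.I * (t - n)) = Complex.exp (2 * π * Complex.I * t) := by
    rw [mul_sub, Complex.exp_sub, mul_comm _ (n : ℂ), Complex.exp_int_mul_two_pi_mul_I, div_one]
  simp [hper]

lemma norm_exp_two_pi_I_mul_sub_one (t : ℝ) :
    ‖Complex.exp (2 * π * Complex.I * t) - 1‖ = 2 * |sin (π * t)| := by
  have := Complex.norm_exp_I_mul_ofReal_sub_one (2 * π * t)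
  rw [show Complex.I * ((2 * π * t : ℝ) : ℂ) = 2 * π * Complex.I * t by push_cast; ring] at this
  rw [this, show 2 * π * t / 2 = π * t by ring]
  simp

lemma norm_sq_fourierCoeffOn_exp_mul {t : ℝ} {n : ℤ} (hn : t ≠ n) :
    ‖fourierCoeffOn zero_lt_one (fun x : ℝ => Complex.exp (2 * π * Complex.I * t * x)) n‖ ^ 2
      = sin (π * t) ^ 2 / π ^ 2 * (1 / (t - n) ^ 2) := by
  have hden : ‖2 * π * Complex.I * ((t : ℂ) - n)‖ = 2 * π * |t - n| := by
    rw [show (t : ℂ) - n = ((t - n : ℝ) : ℂ) by push_cast; ring, norm_mul,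
      Complex.norm_real, Real.norm_eq_abs]
    simp [abs_of_pos Real.pi_pos]
  rw [fourierCoeffOn_exp_mul hn, norm_div, norm_exp_two_pi_I_mul_sub_one, hden, div_pow,
    mul_pow, mul_pow, sq_abs, sq_abs]
  have : t - n ≠ 0 := sub_ne_zero.mpr hn
  field_simp

lemma hasSum_one_div_sub_sq {t : ℝ} (ht : ∀ m : ℤ, t ≠ m) :
    HasSum (fun n : ℤ => 1 / (t - n) ^ 2) (π ^ 2 / sin (π * t) ^ 2) := by
  have hnorm (x : ℝ) : ‖Complex.exp (2 * π * Complex.I * t * x)‖ = 1 := by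
    rw [show 2 * π * Complex.I * t * x = ((2 * π * t * x : ℝ) : ℂ) * Complex.I by push_cast; ring]
    exact Complex.norm_exp_ofReal_mul_I _
  have hL2 : MemLp (fun x : ℝ => Complex.exp (2 * π * Complex.I * t * x)) 2
      (volume.restrict (Set.Ioc 0 1)) :=
    MemLp.of_bound (by fun_prop) 1 (ae_of_all _ fun x => (hnorm x).le)
  have hP := hasSum_sq_fourierCoeffOn zero_lt_one hL2
  simp only [hnorm, one_pow, intervalIntegral.integral_const,
    norm_sq_fourierCoeffOn_exp_mul (ht _)] at hP
  have hsin : sin (π * t) ≠ 0 := by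
    rw [Ne, sin_eq_zero_iff]
    rintro ⟨m, hm⟩
    exact ht m (by field_simp at hm; linarith)
  rw [sub_zero, inv_one, one_smul, one_smul] at hP
  have h := hP.mul_left (π ^ 2 / sin (π * t) ^ 2)
  rw [mul_one] at h
  refine h.congr_fun fun n => ?_
  rw [← mul_assoc, div_mul_div_comm, mul_comm (π ^ 2), div_self (by positivity), one_mul]

lemma hasSum_one_div_odd_add_sq {s : ℝ} (hs : ∀ m : ℤ, s ≠ 2 * m + 1) :
    HasSum (fun j : ℤ => 1 / (2 * j + 1 + s) ^ 2) (π ^ 2 / (4 * cos (π * s / 2) ^ 2)) := by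
  have ht : ∀ m : ℤ, -(1 + s) / 2 ≠ m := fun m hm => hs (-m - 1) (by push_cast; linarith)
  have h := (hasSum_one_div_sub_sq ht).div_const 4
  have hsin : sin (π * (-(1 + s) / 2)) ^ 2 = cos (π * s / 2) ^ 2 := by
    rw [show π * (-(1 + s) / 2) = -(π * s / 2 + π / 2) by ring, sin_neg, sin_add_pi_div_two, neg_sq]
  rw [hsin, div_div, mul_comm (cos _ ^ 2)] at h
  refine h.congr_fun fun j => ?_
  rw [div_div, show (-(1 + s) / 2 - j) ^ 2 * 4 = (2 * j + 1 + s) ^ 2 by ring]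

lemma hasSum_nat_one_div_odd_add_sq_add_one_div_odd_sub_sq {s : ℝ} (hs : ∀ m : ℤ, s ≠ 2 * m + 1) :
    HasSum (fun k : ℕ => 1 / (2 * k + 1 + s) ^ 2 + 1 / (2 * k + 1 - s) ^ 2)
      (π ^ 2 / (4 * cos (π * s / 2) ^ 2)) := by
  refine (hasSum_one_div_odd_add_sq hs).nat_add_neg_add_one.congr_fun fun k => ?_
  push_cast
  ring_nf

lemma four_add_div_four_sub_sq {M c : ℝ} (hM : M ≠ 0) (h₁ : c + 2 / M ≠ 0) (h₂ : c - 2 / M ≠ 0) :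
    (4 + M ^ 2 * c ^ 2) / (4 - M ^ 2 * c ^ 2) ^ 2
      = 1 / (2 * M ^ 2) * (1 / (c + 2 / M) ^ 2 + 1 / (c - 2 / M) ^ 2) := by
  have h₁' : M * c + 2 ≠ 0 := by contrapose! h₁; field_simp; linarith
  have h₂' : M * c - 2 ≠ 0 := by contrapose! h₂; field_simp; linarith
  have hD : 4 - M ^ 2 * c ^ 2 ≠ 0 := by
    rw [show 4 - M ^ 2 * c ^ 2 = -((M * c + 2) * (M * c - 2)) by ring]
    exact neg_ne_zero.mpr (mul_ne_zero h₁' h₂')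
  field_simp
  ring

theorem hasSum_four_add_div_four_sub_sq {M : ℝ} (hM : M ≠ 0) (h : ∀ m : ℤ, M * (2 * m + 1) ≠ 2) :
    HasSum (fun k : ℕ => (4 + M ^ 2 * (2 * k + 1) ^ 2) / (4 - M ^ 2 * (2 * k + 1) ^ 2) ^ 2)
      (π ^ 2 / (8 * M ^ 2 * cos (π / M) ^ 2)) := by
  have hs : ∀ m : ℤ, 2 / M ≠ 2 * m + 1 := fun m hm => h m (by rw [← hm]; field_simp)
  have hsum := (hasSum_nat_one_div_odd_add_sq_add_one_div_odd_sub_sq hs).mul_left (1 / (2 * M ^ 2))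
  rw [show π * (2 / M) / 2 = π / M by ring,
    show 1 / (2 * M ^ 2) * (π ^ 2 / (4 * cos (π / M) ^ 2)) = π ^ 2 / (8 * M ^ 2 * cos (π / M) ^ 2)
      by ring] at hsum
  exact hsum.congr_fun fun k => four_add_div_four_sub_sq hM
    (fun hk => hs (-k - 1) (by push_cast; linarith)) (fun hk => hs k (by push_cast; linarith))

lemma cos_pi_div_ne_zero {M : ℝ} (hM : M ≠ 0) (h : ∀ m : ℤ, M * (2 * m + 1) ≠ 2) :
    cos (π / M) ≠ 0 := by
  rw [cos_ne_zero_iff]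
  intro m hm
  apply h m
  field_simp at hm
  nlinarith [pi_pos]

theorem stmt_16 (n : ℤ) :
    π ^ 2 = 8 * (2 * (n : ℝ) + 1) ^ 2 * Real.cos (π / (2 * (n : ℝ) + 1)) ^ 2 *
      ∑' k : ℕ, (4 + (2 * (n : ℝ) + 1) ^ 2 * (2 * (k : ℝ) + 1) ^ 2) /
        (4 - (2 * (n : ℝ) + 1) ^ 2 * (2 * (k : ℝ) + 1) ^ 2) ^ 2 := by
  have hM : 2 * (n : ℝ) + 1 ≠ 0 := by exact_mod_cast (by omega : 2 * n + 1 ≠ 0)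
  have hodd (m : ℤ) : (2 * (n : ℝ) + 1) * (2 * m + 1) ≠ 2 := by
    intro hm
    have hZ : (2 * n + 1) * (2 * m + 1) = (2 : ℤ) := by exact_mod_cast hm
    exact (by decide : ¬ Odd (2 : ℤ)) (hZ ▸ (odd_two_mul_add_one n).mul (odd_two_mul_add_one m))
  rw [(hasSum_four_add_div_four_sub_sq hM hodd).tsum_eq]
  field_simp [cos_pi_div_ne_zero hM hodd]
end

section
/- For all real x with |x| < π/2, log(cosh x) = ∑_{k≥1} (2x/π)^{2k} · ((-1)^{k-1}/k) · (1 - 1/4^k) · ζ(2k), where ζ is the Riemann zeta function. -/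
/-!
Taking logarithms in Euler's product `sinh (π x) = π x ∏ₙ (1 + x² / n²)` and using
`cosh (π q / 2) = sinh (π q) / (2 sinh (π q / 2))` gives
`log cosh (π q / 2) = ∑ₙ log ((1 + q² / n²) / (1 + q² / (4 n²)))`. Expanding each logarithm in
powers of `(q / n)²` produces a double series which, for `|q| < 1`, converges absolutely; summing
it over `n` first turns the coefficient of `q ^ (2 k)` into `(-1) ^ (k - 1) / k · (1 - 4⁻ᵏ) ζ(2 k)`.
Then take `q = 2 x / π`.
-/

open Real Filter Topology Finset

theorem HasSum.prod_fiberwise_snd {α β γ : Type*} [AddCommMonoid α] [TopologicalSpace α]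
    [ContinuousAdd α] [RegularSpace α] {f : β × γ → α} {g : γ → α} {a : α}
    (ha : HasSum f a) (hf : ∀ c, HasSum (fun b => f (b, c)) (g c)) : HasSum g a :=
  ((Equiv.prodComm γ β).hasSum_iff.mpr ha).prod_fiberwise hf

theorem hasSum_riemannZeta_natCast {m : ℕ} (hm : 1 < m) :
    HasSum (fun n : ℕ => 1 / ((n : ℂ) + 1) ^ m) (riemannZeta m) := by
  have hs : Summable fun n : ℕ => 1 / (n : ℂ) ^ m :=
    .of_norm (by simpa using Real.summable_one_div_nat_pow.mpr hm)
  have h := (hasSum_nat_add_iff' 1).mpr (zeta_nat_eq_tsum_of_gt_one hm ▸ hs.hasSum)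
  simpa [zero_pow (by omega : m ≠ 0)] using h

namespace Real

theorem tendsto_euler_sinh_prod_s18 (x : ℝ) :
    Tendsto (fun n : ℕ => π * x * ∏ j ∈ range n, (1 + x ^ 2 / ((j : ℝ) + 1) ^ 2))
      atTop (𝓝 (sinh (π * x))) := by
  have h := (Complex.tendsto_euler_sin_prod (x * Complex.I)).mul_const (-Complex.I)
  rw [← mul_assoc, ← Complex.ofReal_mul, Complex.sin_mul_I, ← Complex.ofReal_sinh, mul_assoc,
    mul_neg, Complex.I_mul_I, neg_neg, mul_one] at h
  rw [← tendsto_ofReal_iff]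
  refine h.congr fun n => ?_
  simp only [mul_pow, Complex.I_sq, mul_neg_one, neg_div, sub_neg_eq_add]
  push_cast
  ring_nf
  rw [Complex.I_sq]
  ring

theorem tendsto_euler_cosh_prod_s18 (x : ℝ) :
    Tendsto (fun n : ℕ => ∏ j ∈ range n,
      (1 + x ^ 2 / ((j : ℝ) + 1) ^ 2) / (1 + (x / 2) ^ 2 / ((j : ℝ) + 1) ^ 2))
      atTop (𝓝 (cosh (π * x / 2))) := by
  rcases eq_or_ne x 0 with rfl | hx
  · simp
  have hs : sinh (π * (x / 2)) ≠ 0 := sinh_ne_zero.mpr (by positivity)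
  have h := ((tendsto_euler_sinh_prod_s18 x).div (tendsto_euler_sinh_prod_s18 (x / 2)) hs).div_const 2
  rw [show π * x = 2 * (π * (x / 2)) by ring, sinh_two_mul,
    show 2 * sinh (π * (x / 2)) * cosh (π * (x / 2)) / sinh (π * (x / 2)) / 2
      = cosh (π * x / 2) by field_simp] at h
  refine h.congr fun n => ?_
  have hP : ∏ j ∈ range n, (1 + (x / 2) ^ 2 / ((j : ℝ) + 1) ^ 2) ≠ 0 :=
    prod_ne_zero_iff.mpr fun j _ => by positivity
  rw [Pi.div_apply, prod_div_distrib]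
  field_simp

theorem hasSum_log_of_tendsto_prod {f : ℕ → ℝ} (hf : ∀ n, 1 ≤ f n) {L : ℝ}
    (h : Tendsto (fun n => ∏ i ∈ range n, f i) atTop (𝓝 L)) :
    HasSum (fun n => log (f n)) (log L) := by
  have hL : 1 ≤ L := ge_of_tendsto' h fun n => one_le_prod fun i _ => hf i
  rw [hasSum_iff_tendsto_nat_of_nonneg fun n => log_nonneg (hf n)]
  refine ((continuousAt_log (by positivity)).tendsto.comp h).congr fun n => ?_
  rw [Function.comp_apply, log_prod fun i _ => by linarith [hf i]]

theorem hasSum_log_one_add_sq {t : ℝ} (ht : |t| < 1) :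
    HasSum (fun k : ℕ => (-1) ^ k / (k + 1) * t ^ (2 * (k + 1))) (log (1 + t ^ 2)) := by
  have h : |-t ^ 2| < 1 := by
    rw [abs_neg, abs_pow, sq_lt_one_iff₀ (abs_nonneg t)]; exact ht
  have h' := (hasSum_pow_div_log_of_abs_lt_one h).neg
  rw [neg_neg, sub_neg_eq_add] at h'
  refine h'.congr_fun fun k => ?_
  rw [neg_pow, pow_mul]
  ring

end Real

/-- The `(n, k)` term of the double series; `n + 1` and `k + 1` play the roles of `n` and `k`. -/
noncomputable def logCoshTerm (q : ℝ) (p : ℕ × ℕ) : ℝ :=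
  (-1) ^ p.2 / (p.2 + 1) * (1 - 1 / 4 ^ (p.2 + 1)) * (q / (p.1 + 1)) ^ (2 * (p.2 + 1))

theorem abs_logCoshTerm_le (q : ℝ) (n k : ℕ) :
    |logCoshTerm q (n, k)| ≤ 1 / ((n : ℝ) + 1) ^ 2 * (q ^ 2) ^ (k + 1) := by
  have hn : (1 : ℝ) ≤ ((n : ℝ) + 1) ^ 2 := one_le_pow₀ (by simp)
  have h4 : (1 : ℝ) ≤ 4 ^ (k + 1) := one_le_pow₀ (by norm_num)
  have hc : |(-1 : ℝ) ^ k / (k + 1) * (1 - 1 / 4 ^ (k + 1))| ≤ 1 := by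
    rw [abs_mul, abs_div, abs_pow, abs_neg, abs_one, one_pow, abs_of_pos (by positivity),
      abs_of_nonneg (sub_nonneg.mpr ((div_le_one (by positivity)).mpr h4))]
    exact mul_le_one₀ ((div_le_one (by positivity)).mpr (by simp))
      (sub_nonneg.mpr ((div_le_one (by positivity)).mpr h4)) (by simp)
  have hr : |q / (n + 1)| ^ (2 * (k + 1)) ≤ 1 / ((n : ℝ) + 1) ^ 2 * (q ^ 2) ^ (k + 1) := by
    rw [pow_mul, sq_abs, div_pow, div_pow, one_div_mul_eq_div]
    exact div_le_div_of_nonneg_left (by positivity) (by positivity) (le_self_pow₀ hn (by simp))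
  calc |logCoshTerm q (n, k)|
      = |(-1 : ℝ) ^ k / (k + 1) * (1 - 1 / 4 ^ (k + 1))| * |q / (n + 1)| ^ (2 * (k + 1)) := by
        rw [logCoshTerm, abs_mul, abs_pow]
    _ ≤ 1 * (1 / ((n : ℝ) + 1) ^ 2 * (q ^ 2) ^ (k + 1)) := by gcongr
    _ = _ := one_mul _

theorem summable_logCoshTerm {q : ℝ} (hq : |q| < 1) : Summable (logCoshTerm q) := by
  have hζ : Summable fun n : ℕ => 1 / ((n : ℝ) + 1) ^ 2 := by
    simpa using (summable_nat_add_iff 1).mpr (Real.summable_one_div_nat_pow.mpr one_lt_two)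
  have hgeom : Summable fun k : ℕ => (q ^ 2) ^ (k + 1) :=
    (summable_nat_add_iff 1).mpr (summable_geometric_of_lt_one (sq_nonneg q)
      (by rwa [sq_lt_one_iff_abs_lt_one]))
  exact .of_norm_bounded (hζ.mul_of_nonneg hgeom (fun n => by positivity) fun k => by positivity)
    fun p => abs_logCoshTerm_le q p.1 p.2

theorem hasSum_logCoshTerm_fixed_n {q : ℝ} (hq : |q| < 1) (n : ℕ) :
    HasSum (fun k => logCoshTerm q (n, k))
      (log ((1 + q ^ 2 / ((n : ℝ) + 1) ^ 2) / (1 + (q / 2) ^ 2 / ((n : ℝ) + 1) ^ 2))) := by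
  set t := q / (n + 1) with ht
  have ht1 : |t| < 1 := by
    rw [ht, abs_div, abs_of_pos (by positivity : (0 : ℝ) < n + 1), div_lt_one (by positivity)]
    linarith [(Nat.cast_nonneg n : (0 : ℝ) ≤ n)]
  have ht2 : |t / 2| < 1 := by rw [abs_div, abs_two]; linarith
  rw [show (1 + q ^ 2 / ((n : ℝ) + 1) ^ 2) / (1 + (q / 2) ^ 2 / ((n : ℝ) + 1) ^ 2)
      = (1 + t ^ 2) / (1 + (t / 2) ^ 2) by rw [ht]; field_simp,
    log_div (by positivity) (by positivity)]
  refine ((hasSum_log_one_add_sq ht1).sub (hasSum_log_one_add_sq ht2)).congr_fun fun k => ?_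
  rw [logCoshTerm, div_pow t, pow_mul 2, show ((2 : ℝ) ^ 2) = 4 by norm_num]
  ring

theorem hasSum_logCoshTerm_fixed_k (q : ℝ) (k : ℕ) :
    HasSum (fun n => (logCoshTerm q (n, k) : ℂ))
      (((-1) ^ k / (k + 1) * (1 - 1 / 4 ^ (k + 1)) * q ^ (2 * (k + 1)) : ℝ) *
        riemannZeta (2 * (k + 1))) := by
  have h := (hasSum_riemannZeta_natCast (m := 2 * (k + 1)) (by omega)).mul_left
    (((-1) ^ k / (k + 1) * (1 - 1 / 4 ^ (k + 1)) * q ^ (2 * (k + 1)) : ℝ) : ℂ)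
  push_cast at h ⊢
  refine h.congr_fun fun n => ?_
  rw [logCoshTerm, div_pow]
  push_cast
  ring

theorem hasSum_log_cosh_riemannZeta {q : ℝ} (hq : |q| < 1) :
    HasSum (fun k : ℕ => (((-1) ^ k / (k + 1) * (1 - 1 / 4 ^ (k + 1)) * q ^ (2 * (k + 1)) : ℝ) : ℂ)
        * riemannZeta (2 * (k + 1)))
      (log (cosh (π * q / 2))) := by
  have hfactor (n : ℕ) :
      1 ≤ (1 + q ^ 2 / ((n : ℝ) + 1) ^ 2) / (1 + (q / 2) ^ 2 / ((n : ℝ) + 1) ^ 2) := by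
    rw [one_le_div (by positivity)]
    gcongr 1 + ?_ / _
    nlinarith [sq_nonneg q]
  have hrows := hasSum_log_of_tendsto_prod hfactor (tendsto_euler_cosh_prod_s18 q)
  have hS := (summable_logCoshTerm hq).hasSum
  have hL : HasSum (logCoshTerm q) (log (cosh (π * q / 2))) :=
    (hS.prod_fiberwise (hasSum_logCoshTerm_fixed_n hq)).unique hrows ▸ hS
  exact (Complex.hasSum_ofReal.mpr hL).prod_fiberwise_snd (hasSum_logCoshTerm_fixed_k q)

theorem stmt_18 (x : ℝ) (hx : |x| < π / 2) :
    (Real.log (Real.cosh x) : ℂ) =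
      ∑' k : ℕ, ((2 * x / π : ℝ) : ℂ) ^ (2 * (k + 1)) * ((-1) ^ (k + 1 - 1) / ((k : ℂ) + 1)) *
        (1 - 1 / 4 ^ (k + 1)) * riemannZeta (2 * (k + 1)) := by
  have hq : |2 * x / π| < 1 := by
    rw [abs_div, abs_mul, abs_two, abs_of_pos pi_pos, div_lt_one pi_pos]
    linarith
  have h := hasSum_log_cosh_riemannZeta hq
  rw [show π * (2 * x / π) / 2 = x by field_simp] at h
  refine h.tsum_eq.symm.trans (tsum_congr fun k => ?_)
  rw [Nat.add_sub_cancel]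
  push_cast
  ring
end
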